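/- If U is a minimal spreading set of a Steiner triple system on a finite set V with |V| = n > 1, then 2^{|U|} ≤ n + 1 (equivalently, |U| ≤ log₂(n+1)). -/
import Mathlib


/-- A Steiner triple system on `V`: a family `T` of 3-element `Finset`s such that
every pair of distinct points lies in exactly one member of `T`. -/
def IsSTS {V : Type*} (T : Set (Finset V)) : Prop :=
  (∀ t ∈ T, t.card = 3) ∧
    ∀ x y : V, x ≠ y → ∃! t : Finset V, t ∈ T ∧ x ∈ t ∧ y ∈ t

/-- `W` is closed w.r.t. the triple system `T`: whenever a triple of `T` contains two
points of `W`, all (in particular the third) of its points lie in `W`. -/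
def StsClosed {V : Type*} (T : Set (Finset V)) (W : Set V) : Prop :=
  ∀ t ∈ T, ∀ x ∈ t, ∀ y ∈ t, x ≠ y → x ∈ W → y ∈ W → ∀ z ∈ t, z ∈ W

/-- The closure of `S` w.r.t. `T`: the smallest closed set containing `S`. -/
def stsCl {V : Type*} (T : Set (Finset V)) (S : Set V) : Set V :=
  ⋂₀ {W : Set V | S ⊆ W ∧ StsClosed T W}

/-- `S` is a spreading set: its closure is the whole point set. -/
def IsSpreading {V : Type*} (T : Set (Finset V)) (S : Set V) : Prop :=
  stsCl T S = Set.univ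

/-- `S` is a minimal spreading set: it is spreading but no proper subset is. -/
def IsMinSpreading {V : Type*} (T : Set (Finset V)) (S : Set V) : Prop :=
  IsSpreading T S ∧ ∀ S' : Set V, S' ⊂ S → ¬ IsSpreading T S'

section Aux

variable {V : Type*} {T : Set (Finset V)}

lemma subset_stsCl (S : Set V) : S ⊆ stsCl T S := fun x hx =>
  Set.mem_sInter.2 fun _ hW => hW.1 hx

lemma stsClosed_stsCl (S : Set V) : StsClosed T (stsCl T S) := by
  intro t ht x hx y hy hxy hxC hyC z hz
  refine Set.mem_sInter.2 fun W hW => ?_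
  exact hW.2 t ht x hx y hy hxy (Set.mem_sInter.1 hxC W hW) (Set.mem_sInter.1 hyC W hW) z hz

lemma stsCl_subset {S W : Set V} (h : S ⊆ W) (hW : StsClosed T W) : stsCl T S ⊆ W :=
  Set.sInter_subset_of_mem ⟨h, hW⟩

lemma stsCl_mono {S S' : Set V} (h : S ⊆ S') : stsCl T S ⊆ stsCl T S' :=
  stsCl_subset (h.trans (subset_stsCl S')) (stsClosed_stsCl S')

lemma stsCl_cl_union_singleton (S : Set V) (x : V) :
    stsCl T (stsCl T S ∪ {x}) = stsCl T (S ∪ {x}) := by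
  apply subset_antisymm
  · apply stsCl_subset _ (stsClosed_stsCl _)
    apply Set.union_subset
    · exact stsCl_mono Set.subset_union_left
    · exact (Set.singleton_subset_iff.2 (subset_stsCl _ (Set.mem_union_right _ rfl)))
  · exact stsCl_mono (Set.union_subset_union_left _ (subset_stsCl S))

/-- The key growth lemma: adjoining a new point to a closed set at least doubles
(plus one) the size after taking closure. -/
lemma stsCl_grow [Fintype V] (hT : IsSTS T) {W : Set V} (hW : StsClosed T W)
    {x : V} (hx : x ∉ W) :
    2 * W.ncard + 1 ≤ (stsCl T (W ∪ {x})).ncard := by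
  classical
  set C := stsCl T (W ∪ {x}) with hC
  have hxC : x ∈ C := subset_stsCl _ (Set.mem_union_right _ rfl)
  have hWC : W ⊆ C := (Set.subset_union_left).trans (subset_stsCl _)
  -- for each w ∈ W pick the third point of the triple through x and w
  have hthird : ∀ w ∈ W, ∃ z : V, ∃ t ∈ T, x ∈ t ∧ w ∈ t ∧ z ∈ t ∧ z ≠ x ∧ z ≠ w := by
    intro w hw
    have hxw : x ≠ w := fun h => hx (h ▸ hw)
    obtain ⟨t, ⟨htT, hxt, hwt⟩, -⟩ := hT.2 x w hxw
    have hsub : ({x, w} : Finset V) ⊂ t := by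
      refine HasSubset.Subset.ssubset_of_ne ?_ ?_
      · intro a ha
        simp only [Finset.mem_insert, Finset.mem_singleton] at ha
        rcases ha with rfl | rfl <;> assumption
      · intro h
        have := hT.1 t htT
        rw [← h, Finset.card_insert_of_notMem (by simpa using hxw),
          Finset.card_singleton] at this
        omega
    obtain ⟨z, hzt, hz⟩ := Finset.exists_of_ssubset hsub
    simp only [Finset.mem_insert, Finset.mem_singleton, not_or] at hz
    exact ⟨z, t, htT, hxt, hwt, hzt, hz.1, hz.2⟩
  choose! f t htT hxt hwt hft hfx hfw using hthird
  -- the third points are in C, outside W, distinct from x, and f is injective on W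
  have hfC : ∀ w ∈ W, f w ∈ C := by
    intro w hw
    have hxw : x ≠ w := fun h => hx (h ▸ hw)
    exact stsClosed_stsCl _ (t w) (htT w hw) x (hxt w hw) w (hwt w hw) hxw hxC (hWC hw)
      (f w) (hft w hw)
  have hfW : ∀ w ∈ W, f w ∉ W := by
    intro w hw hmem
    have hwz : w ≠ f w := fun h => (hfw w hw) h.symm
    exact hx (hW (t w) (htT w hw) w (hwt w hw) (f w) (hft w hw) hwz hw hmem x (hxt w hw))
  have hinj : Set.InjOn f W := by
    intro w1 h1 w2 h2 heq
    by_contra hne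
    have hzx : f w1 ≠ x := hfx w1 h1
    have huniq := hT.2 x (f w1) (Ne.symm hzx)
    have h12 : t w1 = t w2 := by
      obtain ⟨t0, -, huni⟩ := huniq
      have e1 : t w1 = t0 := huni _ ⟨htT w1 h1, hxt w1 h1, hft w1 h1⟩
      have e2 : t w2 = t0 := huni _ ⟨htT w2 h2, hxt w2 h2, heq ▸ hft w2 h2⟩
      rw [e1, e2]
    -- then t w1 contains 4 distinct points x, w1, w2, f w1
    have hsub : ({x, w1, w2, f w1} : Finset V) ⊆ t w1 := by
      intro a ha
      simp only [Finset.mem_insert, Finset.mem_singleton] at ha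
      rcases ha with rfl | rfl | rfl | rfl
      · exact hxt _ h1
      · exact hwt _ h1
      · exact h12 ▸ hwt _ h2
      · exact hft _ h1
    have hcard : ({x, w1, w2, f w1} : Finset V).card = 4 := by
      have hxw1 : x ≠ w1 := fun h => hx (h ▸ h1)
      have hxw2 : x ≠ w2 := fun h => hx (h ▸ h2)
      have hzw1 : f w1 ≠ w1 := hfw w1 h1
      have hzw2 : f w1 ≠ w2 := heq ▸ hfw w2 h2
      rw [Finset.card_insert_of_notMem (by simp [hxw1, hxw2, Ne.symm hzx]),
        Finset.card_insert_of_notMem (by simp [hne, Ne.symm hzw1]),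
        Finset.card_insert_of_notMem (by simp [Ne.symm hzw2]), Finset.card_singleton]
    have := Finset.card_le_card hsub
    rw [hcard, hT.1 (t w1) (htT w1 h1)] at this
    omega
  -- counting
  have hsub : insert x (W ∪ f '' W) ⊆ C := by
    refine Set.insert_subset hxC (Set.union_subset hWC ?_)
    rintro _ ⟨w, hw, rfl⟩; exact hfC w hw
  have hdisj : Disjoint W (f '' W) := by
    rw [Set.disjoint_right]
    rintro _ ⟨w, hw, rfl⟩
    exact hfW w hw
  have hxnot : x ∉ W ∪ f '' W := by
    rintro (h | ⟨w, hw, h⟩)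
    · exact hx h
    · exact hfx w hw h
  have h1 : (insert x (W ∪ f '' W)).ncard = (W ∪ f '' W).ncard + 1 :=
    Set.ncard_insert_of_notMem hxnot (Set.toFinite _)
  have h2 : (W ∪ f '' W).ncard = W.ncard + (f '' W).ncard :=
    Set.ncard_union_eq hdisj (Set.toFinite _) (Set.toFinite _)
  have h3 : (f '' W).ncard = W.ncard := Set.ncard_image_of_injOn hinj
  have h4 := Set.ncard_le_ncard hsub (Set.toFinite _)
  omega

end Aux

/-- Every minimal spreading set `U` of a Steiner triple system on a finite set `V`
with `|V| = n > 1` satisfies `2 ^ |U| ≤ n + 1`, i.e. `|U| ≤ log₂ (n + 1)`. -/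
theorem minSpreading_card_le {V : Type*} [Fintype V] (T : Set (Finset V))
    (hT : IsSTS T) (hn : 1 < Fintype.card V) (U : Finset V)
    (hU : IsMinSpreading T ↑U) :
    2 ^ U.card ≤ Fintype.card V + 1 := by
  classical
  -- no element of U is in the closure of the rest
  have hnotin : ∀ a ∈ U, a ∉ stsCl T ↑(U.erase a) := by
    intro a ha hmem
    have hss : (↑(U.erase a) : Set V) ⊂ ↑U := by
      rw [Finset.coe_ssubset]
      exact Finset.erase_ssubset ha
    apply hU.2 _ hss
    have hsubU : (↑U : Set V) ⊆ stsCl T ↑(U.erase a) := by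
      intro b hb
      by_cases hba : b = a
      · exact hba ▸ hmem
      · exact subset_stsCl _ (by
          simp only [Finset.coe_erase, Set.mem_diff, Set.mem_singleton_iff]
          exact ⟨hb, hba⟩)
    have := stsCl_subset hsubU (stsClosed_stsCl _)
    rw [hU.1] at this
    exact Set.eq_univ_of_univ_subset this
  -- main induction
  have key : ∀ U' : Finset V, U' ⊆ U → 2 ^ U'.card ≤ (stsCl T ↑U').ncard + 1 := by
    intro U'
    induction U' using Finset.induction_on with
    | empty => intro _; simp
    | @insert a W ha ih =>
      intro hsub
      have haU : a ∈ U := hsub (Finset.mem_insert_self a W)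
      have hWU : W ⊆ U.erase a := fun w hw =>
        Finset.mem_erase.2 ⟨fun h => ha (h ▸ hw), hsub (Finset.mem_insert_of_mem hw)⟩
      have hanot : a ∉ stsCl T ↑W := fun h =>
        hnotin a haU (stsCl_mono (by exact_mod_cast hWU) h)
      have hgrow := stsCl_grow hT (stsClosed_stsCl (T := T) (↑W)) hanot
      rw [stsCl_cl_union_singleton, Set.union_singleton] at hgrow
      have hih := ih (hWU.trans (Finset.erase_subset a U))
      have hcoe : (↑(insert a W) : Set V) = insert a ↑W := Finset.coe_insert a W
      rw [Finset.card_insert_of_notMem ha, hcoe, pow_succ]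
      omega
  have := key U Finset.Subset.rfl
  rw [hU.1, Set.ncard_univ, Nat.card_eq_fintype_card] at this
  exact this
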